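/- arXiv:2504.17202 — 7 statements merged into one kernel-verified Lean document; each statement's English description precedes it below -/
import Mathlib

section
/- Let (p,Q) be a block-model parameter pair on k communities whose matrix Q is diagonal, i.e. Q i j = 0 whenever i ≠ j. Then for every connected finite simple graph H with at least one edge, Ψ_{p,Q}(H) ≤ max(Ψ_{p,Q}(Star_1), Ψ_{p,Q}(Star_2)). -/
set_option linter.unusedVariables false

open Finset

open Finset

/-- The Fourier coefficient Φ_{p,Q}(H) of a finite simple graph `H`. -/
noncomputable def Phi {k : ℕ} (p : Fin k → ℝ) (Q : Fin k → Fin k → ℝ)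
    (hQ : ∀ i j, Q i j = Q j i) {V : Type} [Fintype V] [DecidableEq V]
    (H : SimpleGraph V) [DecidableRel H.Adj] : ℝ :=
  ∑ x : V → Fin k, (∏ v, p (x v)) *
    ∏ e ∈ H.edgeFinset,
      Sym2.lift ⟨fun u v => Q (x u) (x v), fun u v => hQ (x u) (x v)⟩ e

/-- The partition value Ψ_{p,Q}(H) = |Φ_{p,Q}(H)|^{1/|V(H)|}. -/
noncomputable def Psi {k : ℕ} (p : Fin k → ℝ) (Q : Fin k → Fin k → ℝ)
    (hQ : ∀ i j, Q i j = Q j i) {V : Type} [Fintype V] [DecidableEq V]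
    (H : SimpleGraph V) [DecidableRel H.Adj] : ℝ :=
  |Phi p Q hQ H| ^ ((Fintype.card V : ℝ)⁻¹)

/-- The star graph with one center (vertex 0) joined to `t` leaves. -/
def StarGraph (t : ℕ) : SimpleGraph (Fin (t + 1)) where
  Adj u v := u ≠ v ∧ (u = 0 ∨ v = 0)
  symm := ⟨fun u v h => ⟨h.1.symm, h.2.symm⟩⟩
  loopless := ⟨fun u h => h.1 rfl⟩

instance (t : ℕ) : DecidableRel (StarGraph t).Adj :=
  fun u v => inferInstanceAs (Decidable (u ≠ v ∧ (u = 0 ∨ v = 0)))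

/-- The cycle graph on 4 vertices. -/
def Cyc4 : SimpleGraph (Fin 4) where
  Adj u v := u ≠ v ∧ ((u.val + 1) % 4 = v.val ∨ (v.val + 1) % 4 = u.val)
  symm := ⟨fun u v h => ⟨h.1.symm, h.2.symm⟩⟩
  loopless := ⟨fun u h => h.1 rfl⟩

instance : DecidableRel Cyc4.Adj :=
  fun u v => inferInstanceAs
    (Decidable (u ≠ v ∧ ((u.val + 1) % 4 = v.val ∨ (v.val + 1) % 4 = u.val)))

/-! With `Q` diagonal, a labelling of a connected graph contributes to `Φ(H)` only if it is
constant, so `Φ(H) = ∑ᵢ pᵢⁿ qᵢᵐ` with `n = |V(H)|`, `m = |E(H)|` and `qᵢ = Q i i`; this is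
`Φ(Star₁)` when `n = 2`. When `n ≥ 3`, connectivity gives `m ≥ n - 1 ≥ 2n/3`, hence
`|pᵢⁿ qᵢᵐ| ≤ (pᵢ³ qᵢ²)^{n/3}`, and superadditivity of `x ↦ x^{n/3}` on `[0, ∞)` bounds `|Φ(H)|`
by `Φ(Star₂)^{n/3}`. -/

namespace SimpleGraph

variable {V : Type*} {G : SimpleGraph V}

theorem Preconnected.apply_eq_of_forall_adj {α : Type*} (hG : G.Preconnected) {f : V → α}
    (hf : ∀ u v, G.Adj u v → f u = f v) (a b : V) : f a = f b := by
  obtain ⟨w⟩ := hG a b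
  induction w with
  | nil => rfl
  | cons h _ ih => exact (hf _ _ h).trans ih

end SimpleGraph

theorem Real.sum_rpow_le_rpow_sum {ι : Type*} (s : Finset ι) {f : ι → ℝ}
    (hf : ∀ i ∈ s, 0 ≤ f i) {r : ℝ} (hr : 1 ≤ r) :
    ∑ i ∈ s, f i ^ r ≤ (∑ i ∈ s, f i) ^ r := by
  classical
  induction s using Finset.induction_on with
  | empty => simp [Real.zero_rpow (by linarith : r ≠ 0)]
  | insert a s ha ih =>
    have hf' : ∀ i ∈ s, 0 ≤ f i := fun i hi => hf i (mem_insert_of_mem hi)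
    rw [sum_insert ha, sum_insert ha]
    calc f a ^ r + ∑ i ∈ s, f i ^ r ≤ f a ^ r + (∑ i ∈ s, f i) ^ r := by gcongr; exact ih hf'
      _ ≤ (f a + ∑ i ∈ s, f i) ^ r :=
        Real.add_rpow_le_rpow_add (hf a (mem_insert_self a s)) (sum_nonneg hf') hr

theorem abs_pow_mul_pow_le_rpow {a b : ℝ} (ha : 0 ≤ a) (hb : |b| ≤ 1) {n m : ℕ}
    (hnm : 2 * n ≤ 3 * m) : |a ^ n * b ^ m| ≤ (a ^ 3 * b ^ 2) ^ ((n : ℝ) / 3) := by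
  have hcube : |a ^ n * b ^ m| ^ 3 ≤ (a ^ 3 * b ^ 2) ^ n :=
    calc |a ^ n * b ^ m| ^ 3 = a ^ (3 * n) * |b| ^ (3 * m) := by
          rw [abs_mul, abs_pow, abs_pow, abs_of_nonneg ha]; ring
      _ ≤ a ^ (3 * n) * |b| ^ (2 * n) :=
          mul_le_mul_of_nonneg_left (pow_le_pow_of_le_one (abs_nonneg b) hb hnm) (by positivity)
      _ = (a ^ 3 * b ^ 2) ^ n := by rw [← sq_abs b]; ring
  rw [div_eq_mul_inv, Real.rpow_natCast_mul (by positivity),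
    Real.le_rpow_inv_iff_of_pos (abs_nonneg _) (by positivity) (by norm_num)]
  exact_mod_cast hcube

theorem abs_sum_pow_mul_pow_le {ι : Type*} (s : Finset ι) {a b : ι → ℝ}
    (ha : ∀ i ∈ s, 0 ≤ a i) (hb : ∀ i ∈ s, |b i| ≤ 1) {n m : ℕ} (hnm : 2 * n ≤ 3 * m)
    (hn : 3 ≤ n) :
    |∑ i ∈ s, a i ^ n * b i ^ m| ≤ (∑ i ∈ s, a i ^ 3 * b i ^ 2) ^ ((n : ℝ) / 3) :=
  calc |∑ i ∈ s, a i ^ n * b i ^ m| ≤ ∑ i ∈ s, |a i ^ n * b i ^ m| := abs_sum_le_sum_abs _ _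
    _ ≤ ∑ i ∈ s, (a i ^ 3 * b i ^ 2) ^ ((n : ℝ) / 3) :=
        sum_le_sum fun i hi => abs_pow_mul_pow_le_rpow (ha i hi) (hb i hi) hnm
    _ ≤ _ := Real.sum_rpow_le_rpow_sum s (fun i hi => by have := ha i hi; positivity)
        (by rw [le_div_iff₀ (by norm_num)]; exact_mod_cast hn)

theorem SimpleGraph.Connected.card_le_card_edgeFinset_add_one {V : Type*} [Fintype V]
    {G : SimpleGraph V} [DecidableRel G.Adj] (hG : G.Connected) :
    Fintype.card V ≤ #G.edgeFinset + 1 := by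
  have := hG.card_vert_le_card_edgeSet_add_one
  rwa [Nat.card_eq_fintype_card, ← SimpleGraph.coe_edgeFinset, Nat.card_coe_set_eq,
    Set.ncard_coe_finset] at this

theorem starGraph_connected (t : ℕ) : (StarGraph t).Connected := by
  have hcenter : ∀ v, (StarGraph t).Reachable 0 v := fun v => by
    rcases eq_or_ne v 0 with rfl | hv
    · rfl
    · exact SimpleGraph.Adj.reachable ⟨hv.symm, Or.inl rfl⟩
  exact .mk fun u v => (hcenter u).symm.trans (hcenter v)

section Diagonal

variable {k : ℕ} {p : Fin k → ℝ} {Q : Fin k → Fin k → ℝ} {hQ : ∀ i j, Q i j = Q j i}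
  {V : Type} [Fintype V] [DecidableEq V] {H : SimpleGraph V} [DecidableRel H.Adj]

theorem Phi_eq_sum_of_connected (hdiag : ∀ i j, i ≠ j → Q i j = 0) (hconn : H.Connected) :
    Phi p Q hQ H = ∑ i, p i ^ Fintype.card V * Q i i ^ #H.edgeFinset := by
  have := hconn.nonempty
  refine (Fintype.sum_of_injective (Function.const V) Function.const_injective _ _ ?_ ?_).symm
  · intro x hx
    obtain ⟨u, v, huv, hne⟩ : ∃ u v, H.Adj u v ∧ x u ≠ x v := by
      by_contra! hcon
      obtain ⟨v⟩ := this
      exact hx ⟨x v, funext fun u => hconn.preconnected.apply_eq_of_forall_adj hcon v u⟩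
    rw [prod_eq_zero (i := s(u, v)) (SimpleGraph.mem_edgeFinset.2 huv) (hdiag _ _ hne), mul_zero]
  · intro i
    simp only [Function.const_apply, prod_const, card_univ]
    congr 1
    rw [← prod_const]
    exact prod_congr rfl fun e _ => by induction e using Sym2.ind; rfl

theorem Psi_eq_Psi_starGraph_one (hdiag : ∀ i j, i ≠ j → Q i j = 0) (hconn : H.Connected)
    (hcard : Fintype.card V = 2) : Psi p Q hQ H = Psi p Q hQ (StarGraph 1) := by
  have hE : #H.edgeFinset = 1 := by
    have := hconn.card_le_card_edgeFinset_add_one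
    have := H.card_edgeFinset_le_card_choose_two
    simp only [hcard, Nat.choose_self] at *
    omega
  have hstar : #(StarGraph 1).edgeFinset = 1 := by decide
  rw [Psi, Psi, Phi_eq_sum_of_connected hdiag hconn,
    Phi_eq_sum_of_connected hdiag (starGraph_connected 1), hcard, hE, hstar, Fintype.card_fin]

theorem Psi_le_Psi_starGraph_two (hp : ∀ i, 0 ≤ p i) (hQbd : ∀ i j, |Q i j| ≤ 1)
    (hdiag : ∀ i j, i ≠ j → Q i j = 0) (hconn : H.Connected) (hcard : 3 ≤ Fintype.card V) :
    Psi p Q hQ H ≤ Psi p Q hQ (StarGraph 2) := by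
  set n := Fintype.card V
  set S := ∑ i, p i ^ 3 * Q i i ^ 2
  have hS : 0 ≤ S := sum_nonneg fun i _ => by have := hp i; positivity
  have hnm : 2 * n ≤ 3 * #H.edgeFinset := by
    have := hconn.card_le_card_edgeFinset_add_one
    omega
  have hstar : #(StarGraph 2).edgeFinset = 2 := by decide
  rw [Psi, Psi, Phi_eq_sum_of_connected hdiag hconn,
    Phi_eq_sum_of_connected hdiag (starGraph_connected 2), hstar, Fintype.card_fin,
    abs_of_nonneg hS]
  calc |∑ i, p i ^ n * Q i i ^ #H.edgeFinset| ^ (n : ℝ)⁻¹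
      ≤ (S ^ ((n : ℝ) / 3)) ^ (n : ℝ)⁻¹ := by
        gcongr
        exact abs_sum_pow_mul_pow_le _ (fun i _ => hp i) (fun i _ => hQbd i i) hnm hcard
    _ = S ^ ((2 + 1 : ℕ) : ℝ)⁻¹ := by
        rw [← Real.rpow_mul hS]
        congr 1
        have : (n : ℝ) ≠ 0 := by positivity
        field_simp
        norm_num

end Diagonal

theorem stmt0_general {k : ℕ} (p : Fin k → ℝ) (Q : Fin k → Fin k → ℝ)
    (hp : ∀ i, 0 ≤ p i)
    (hQ : ∀ i j, Q i j = Q j i) (hQbd : ∀ i j, |Q i j| ≤ 1)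
    (hdiag : ∀ i j, i ≠ j → Q i j = 0)
    {V : Type} [Fintype V] [DecidableEq V] (H : SimpleGraph V) [DecidableRel H.Adj]
    (hconn : H.Connected) (hE : 1 ≤ H.edgeFinset.card) :
    Psi p Q hQ H ≤ max (Psi p Q hQ (StarGraph 1)) (Psi p Q hQ (StarGraph 2)) := by
  obtain ⟨e, he⟩ := card_pos.1 hE
  have htwo : 2 ≤ Fintype.card V := by
    induction e using Sym2.ind with
    | _ u v => exact Fintype.one_lt_card_iff.2 ⟨u, v, (SimpleGraph.mem_edgeFinset.1 he).ne⟩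
  rcases htwo.eq_or_lt with htwo | hthree
  · exact (Psi_eq_Psi_starGraph_one hdiag hconn htwo.symm).trans_le (le_max_left _ _)
  · exact (Psi_le_Psi_starGraph_two hp hQbd hdiag hconn hthree).trans (le_max_right _ _)

/-- In a diagonal SBM, every connected graph with at least one edge
has partition value at most that of the 1-star or the 2-star. -/
theorem stmt0 {k : ℕ} (hk : 1 ≤ k) (p : Fin k → ℝ) (Q : Fin k → Fin k → ℝ)
    (hp : ∀ i, 0 ≤ p i) (hpsum : ∑ i, p i = 1)
    (hQ : ∀ i j, Q i j = Q j i) (hQbd : ∀ i j, |Q i j| ≤ 1)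
    (hdiag : ∀ i j, i ≠ j → Q i j = 0)
    {V : Type} [Fintype V] [DecidableEq V] (H : SimpleGraph V) [DecidableRel H.Adj]
    (hconn : H.Connected) (hE : 1 ≤ H.edgeFinset.card) :
    Psi p Q hQ H ≤ max (Psi p Q hQ (StarGraph 1)) (Psi p Q hQ (StarGraph 2)) :=
  stmt0_general p Q hp hQ hQbd hdiag H hconn hE
end

section
/- Let (p,Q) be a block-model parameter pair on k communities with Q i j ≥ 0 for all i,j, and let D ≥ 1 be a natural number. Then for every connected finite simple graph H with 1 ≤ |E(H)| ≤ D, Ψ_{p,Q}(H) ≤ max_{1 ≤ t ≤ D} Ψ_{p,Q}(Star_t). -/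
set_option linter.unusedVariables false

open Finset

open Finset

/-!
Pass to a spanning tree `T` of `H`: since `0 ≤ Q ≤ 1`, deleting edges can only increase `Φ`,
and `T` has `|V(H)| - 1 ≤ D` edges. With independent `p`-distributed labels, summing out the
label of a leaf `u` hanging at `w` turns the factor `Q (x u) (x w)` into the degree
`d (x w) = ∑ j, p j * Q (x w) j`. So one tracks trees weighted by `∏ v, d (x v) ^ a v`.
Weighted AM-GM bounds such a weight by a convex combination of weights concentrated at a single
vertex `v`, and removing a leaf other than `v` preserves `|E| + ∑ a`. When one vertex is left
the value is `∑ i, p i * d i ^ (|V(H)| - 1)`, which is `Φ(Star_{|V(H)|-1})` by the same leaf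
removal applied to the star.
-/

/-- AM-GM with the integer weights `a i`, cleared of denominators. -/
theorem Real.geom_mean_le_arith_mean_nat_weighted {ι : Type*} (s : Finset ι) (a : ι → ℕ)
    {z : ι → ℝ} (hz : ∀ i ∈ s, 0 ≤ z i) :
    ((∑ i ∈ s, a i : ℕ) : ℝ) * ∏ i ∈ s, z i ^ a i ≤
      ∑ i ∈ s, (a i : ℝ) * z i ^ (∑ j ∈ s, a j) := by
  set A := ∑ i ∈ s, a i
  rcases Nat.eq_zero_or_pos A with hA | hA
  · rw [hA, Nat.cast_zero, zero_mul]
    exact sum_nonneg fun i hi => mul_nonneg (Nat.cast_nonneg _) (pow_nonneg (hz i hi) _)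
  have hA' : (0 : ℝ) < A := by exact_mod_cast hA
  have hpow : ∀ i ∈ s, (z i ^ A) ^ ((a i : ℝ) / A) = z i ^ a i := fun i hi => by
    rw [← Real.rpow_natCast, ← Real.rpow_mul (hz i hi), mul_div_cancel₀ _ hA'.ne',
      Real.rpow_natCast]
  have key := Real.geom_mean_le_arith_mean_weighted s (fun i => (a i : ℝ) / A)
    (fun i => z i ^ A) (fun i _ => by positivity)
    (by rw [← sum_div, ← Nat.cast_sum]; exact div_self hA'.ne')
    (fun i hi => pow_nonneg (hz i hi) _)
  rw [Finset.prod_congr rfl hpow] at key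
  calc (A : ℝ) * ∏ i ∈ s, z i ^ a i
      ≤ A * ∑ i ∈ s, (a i : ℝ) / A * z i ^ A := by gcongr
    _ = ∑ i ∈ s, (a i : ℝ) * z i ^ A := by
      rw [mul_sum]
      exact Finset.sum_congr rfl fun i _ => by field_simp

theorem Fintype.sum_apply_mul_eq_of_update_invariant {V α R : Type*} [Fintype V]
    [DecidableEq V] [Fintype α] [Nonempty α] [CommSemiring R] {u w : V} (hwu : w ≠ u)
    {f g : α → α → R} (hfg : ∀ j, ∑ i, f i j = ∑ i, g i j) {G : (V → α) → R}
    (hG : ∀ x i, G (Function.update x u i) = G x) :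
    ∑ x, f (x u) (x w) * G x = ∑ x, g (x u) (x w) * G x := by
  obtain ⟨i₀⟩ := ‹Nonempty α›
  set e := Equiv.funSplitAt u α
  have hsplit : ∀ F : α → α → R, ∑ x, F (x u) (x w) * G x =
      ∑ y, (∑ i, F i (y ⟨w, hwu⟩)) * G (e.symm (i₀, y)) := by
    intro F
    rw [← e.symm.sum_comp, Fintype.sum_prod_type_right]
    refine Finset.sum_congr rfl fun y _ => ?_
    rw [sum_mul]
    refine Finset.sum_congr rfl fun i _ => ?_
    have hupd : e.symm (i, y) = Function.update (e.symm (i₀, y)) u i := by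
      ext v
      by_cases hv : v = u
      · subst hv; simp [e]
      · simp [e, hv]
    rw [hupd, hG]
    simp [e, hwu]
  simp only [hsplit, hfg]

theorem SimpleGraph.Connected.exists_adj_mem_notMem {V : Type*} [Fintype V]
    {H : SimpleGraph V} (hH : H.Connected) {s : Finset V} (hs : s.Nonempty) (hs' : s ≠ univ) :
    ∃ w ∈ s, ∃ u ∉ s, H.Adj w u := by
  obtain ⟨a, ha⟩ := hs
  obtain ⟨b, hb⟩ : ∃ b, b ∉ s := by simpa [eq_univ_iff_forall] using hs'
  obtain ⟨d, -, hd₁, hd₂⟩ := (hH.preconnected a b).some.exists_boundary_dart (↑s) ha hb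
  exact ⟨d.fst, hd₁, d.snd, hd₂, d.adj⟩

namespace BlockModel

section Tree

variable {V : Type*} [DecidableEq V]

/-- Trees with vertex set `s` and edge set `E`, encoded by attaching one leaf at a time. -/
inductive IsTreeOn : Finset V → Finset (Sym2 V) → Prop
  | single (v : V) : IsTreeOn {v} ∅
  | hang {s : Finset V} {E : Finset (Sym2 V)} {u w : V} :
      IsTreeOn s E → w ∈ s → u ∉ s → IsTreeOn (insert u s) (insert s(u, w) E)

namespace IsTreeOn

variable {s : Finset V} {E : Finset (Sym2 V)}

theorem nonempty (h : IsTreeOn s E) : s.Nonempty := by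
  cases h <;> simp

theorem mem_of_mem_edge (h : IsTreeOn s E) {e : Sym2 V} (he : e ∈ E) {v : V} (hv : v ∈ e) :
    v ∈ s := by
  induction h with
  | single => simp at he
  | hang _ hw _ ih =>
    rcases mem_insert.mp he with rfl | he
    · rcases Sym2.mem_iff.mp hv with rfl | rfl <;> simp [hw]
    · exact mem_insert_of_mem (ih he)

theorem card_add_one (h : IsTreeOn s E) : E.card + 1 = s.card := by
  induction h with
  | single => simp
  | @hang s E u w h _ hu ih =>
    have hnew : s(u, w) ∉ E := fun he => hu (h.mem_of_mem_edge he (Sym2.mem_mk_left u w))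
    rw [card_insert_of_notMem hnew, card_insert_of_notMem hu, ih]

theorem exists_leaf_ne (h : IsTreeOn s E) (hs : s.Nontrivial) (v₀ : V) :
    ∃ u ∈ s, u ≠ v₀ ∧ ∃ w ∈ s.erase u, ∃ E',
      IsTreeOn (s.erase u) E' ∧ E = insert s(u, w) E' := by
  induction h generalizing v₀ with
  | single v => simp at hs
  | @hang s E u₀ w₀ h hw₀ hu₀ ih =>
    have hwu₀ : w₀ ≠ u₀ := ne_of_mem_of_not_mem hw₀ hu₀
    by_cases hv : u₀ = v₀
    · subst hv
      rcases s.eq_singleton_or_nontrivial hw₀ with rfl | hs'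
      · obtain rfl : E = ∅ := by simpa using h.card_add_one
        refine ⟨w₀, by simp, hwu₀, u₀, by simp [hwu₀.symm], ∅, ?_,
          by simp [Sym2.eq_swap]⟩
        rw [erase_insert_of_ne hwu₀.symm, erase_singleton, insert_empty_eq]
        exact .single u₀
      · obtain ⟨u, hu, huw₀, w, hw, E', h', rfl⟩ := ih hs' w₀
        have huu₀ : u ≠ u₀ := ne_of_mem_of_not_mem hu hu₀
        refine ⟨u, mem_insert_of_mem hu, huu₀, w, ?_, insert s(u₀, w₀) E', ?_,
          insert_comm _ _ _⟩
        · exact mem_erase.mpr ⟨(mem_erase.mp hw).1, mem_insert_of_mem (mem_erase.mp hw).2⟩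
        · rw [erase_insert_of_ne huu₀.symm]
          exact h'.hang (mem_erase.mpr ⟨huw₀.symm, hw₀⟩) fun h => hu₀ (mem_of_mem_erase h)
    · exact ⟨u₀, mem_insert_self _ _, hv, w₀, by simp [hwu₀, hw₀], E,
        by rwa [erase_insert hu₀], rfl⟩

theorem exists_spanning [Fintype V] {H : SimpleGraph V} [DecidableRel H.Adj]
    {s : Finset V} {E : Finset (Sym2 V)} (h : IsTreeOn s E) (hH : H.Connected)
    (hE : E ⊆ H.edgeFinset) : ∃ E' ⊆ H.edgeFinset, IsTreeOn univ E' := by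
  by_cases hs : s = univ
  · exact ⟨E, hE, hs ▸ h⟩
  obtain ⟨w, hw, u, hu, hwu⟩ := hH.exists_adj_mem_notMem h.nonempty hs
  have : s.card < (insert u s).card := card_lt_card (ssubset_insert hu)
  have : (insert u s).card ≤ Fintype.card V := card_le_univ _
  exact (h.hang hw hu).exists_spanning hH (insert_subset (H.mem_edgeFinset.mpr hwu.symm) hE)
termination_by Fintype.card V - s.card

end IsTreeOn

theorem _root_.SimpleGraph.Connected.exists_isTreeOn_univ [Fintype V] {H : SimpleGraph V}
    [DecidableRel H.Adj] (hH : H.Connected) : ∃ E ⊆ H.edgeFinset, IsTreeOn univ E :=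
  (IsTreeOn.single hH.nonempty.some).exists_spanning hH (empty_subset _)

end Tree

section Weight

variable {α V : Type*} {p : α → ℝ} {Q : α → α → ℝ} (hQ : ∀ i j, Q i j = Q j i)

def edgeWeight (x : V → α) : Sym2 V → ℝ :=
  Sym2.lift ⟨fun u v => Q (x u) (x v), fun u v => hQ (x u) (x v)⟩

@[simp]
theorem edgeWeight_mk (x : V → α) (u v : V) : edgeWeight hQ x s(u, v) = Q (x u) (x v) := rfl

theorem edgeWeight_nonneg (hQnn : ∀ i j, 0 ≤ Q i j) (x : V → α) (e : Sym2 V) :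
    0 ≤ edgeWeight hQ x e := by
  induction e using Sym2.ind with
  | _ u v => exact hQnn _ _

theorem edgeWeight_le_one (hQ1 : ∀ i j, Q i j ≤ 1) (x : V → α) (e : Sym2 V) :
    edgeWeight hQ x e ≤ 1 := by
  induction e using Sym2.ind with
  | _ u v => exact hQ1 _ _

theorem edgeWeight_update_of_notMem [DecidableEq V] (x : V → α) {u : V} (i : α) {e : Sym2 V}
    (hu : u ∉ e) : edgeWeight hQ (Function.update x u i) e = edgeWeight hQ x e := by
  induction e using Sym2.ind with
  | _ v w =>
    simp only [Sym2.mem_iff, not_or] at hu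
    simp [Function.update_of_ne (Ne.symm hu.1), Function.update_of_ne (Ne.symm hu.2)]

variable [Fintype α]

variable (p Q) in
def degree (i : α) : ℝ := ∑ j, p j * Q i j

theorem degree_nonneg (hp : ∀ i, 0 ≤ p i) (hQnn : ∀ i j, 0 ≤ Q i j) (i : α) :
    0 ≤ degree p Q i :=
  sum_nonneg fun j _ => mul_nonneg (hp j) (hQnn i j)

variable [Fintype V] [DecidableEq V]

variable (p) in
noncomputable def weightedHom (E : Finset (Sym2 V)) (a : V → ℕ) : ℝ :=
  ∑ x : V → α, (∏ v, p (x v) * degree p Q (x v) ^ a v) * ∏ e ∈ E, edgeWeight hQ x e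

theorem weightedHom_nonneg (hp : ∀ i, 0 ≤ p i) (hQnn : ∀ i j, 0 ≤ Q i j)
    (E : Finset (Sym2 V)) (a : V → ℕ) : 0 ≤ weightedHom p hQ E a :=
  sum_nonneg fun x _ => mul_nonneg
    (prod_nonneg fun _ _ => mul_nonneg (hp _) (pow_nonneg (degree_nonneg hp hQnn _) _))
    (prod_nonneg fun e _ => edgeWeight_nonneg hQ hQnn x e)

theorem weightedHom_anti (hp : ∀ i, 0 ≤ p i) (hQnn : ∀ i j, 0 ≤ Q i j)
    (hQ1 : ∀ i j, Q i j ≤ 1) {E F : Finset (Sym2 V)} (hEF : E ⊆ F) (a : V → ℕ) :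
    weightedHom p hQ F a ≤ weightedHom p hQ E a := by
  refine sum_le_sum fun x _ => mul_le_mul_of_nonneg_left ?_
    (prod_nonneg fun _ _ => mul_nonneg (hp _) (pow_nonneg (degree_nonneg hp hQnn _) _))
  exact prod_le_prod_of_subset_of_le_one hEF (fun e _ => edgeWeight_nonneg hQ hQnn x e)
    fun e _ _ => edgeWeight_le_one hQ hQ1 x e

theorem weightedHom_insert_leaf (hpsum : ∑ i, p i = 1) {E : Finset (Sym2 V)} {u w : V}
    (hwu : w ≠ u) (hu : ∀ e ∈ E, u ∉ e) {a : V → ℕ} (hau : a u = 0) :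
    weightedHom p hQ (insert s(u, w) E) a = weightedHom p hQ E (a + Pi.single w 1) := by
  have : Nonempty α := by
    by_contra h
    simp [not_nonempty_iff.mp h] at hpsum
  set G : (V → α) → ℝ := fun x =>
    (∏ v ∈ univ.erase u, p (x v) * degree p Q (x v) ^ a v) * ∏ e ∈ E, edgeWeight hQ x e
  have hG : ∀ x i, G (Function.update x u i) = G x := fun x i => by
    simp only [G]
    congr 1
    · exact Finset.prod_congr rfl fun v hv => by rw [Function.update_of_ne (ne_of_mem_erase hv)]
    · exact Finset.prod_congr rfl fun e he => edgeWeight_update_of_notMem hQ x i (hu e he)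
  have hsplit : ∀ x : V → α, ∏ v, p (x v) * degree p Q (x v) ^ a v =
      p (x u) * ∏ v ∈ univ.erase u, p (x v) * degree p Q (x v) ^ a v := fun x => by
    rw [← mul_prod_erase _ _ (mem_univ u), hau, pow_zero, mul_one]
  have hshift : ∀ x : V → α,
      ∏ v, p (x v) * degree p Q (x v) ^ (a + Pi.single w 1 : V → ℕ) v =
        (∏ v, p (x v) * degree p Q (x v) ^ a v) * degree p Q (x w) := fun x => by
    simp only [Pi.add_apply, pow_add, ← mul_assoc, prod_mul_distrib]
    simp [Pi.single_apply, pow_ite]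
  have hnew : s(u, w) ∉ E := fun h => hu _ h (Sym2.mem_mk_left u w)
  calc weightedHom p hQ (insert s(u, w) E) a
      = ∑ x, (p (x u) * Q (x u) (x w)) * G x := Finset.sum_congr rfl fun x _ => by
        rw [prod_insert hnew, hsplit, edgeWeight_mk]; ring
    _ = ∑ x, (p (x u) * degree p Q (x w)) * G x :=
        Fintype.sum_apply_mul_eq_of_update_invariant hwu (f := fun i j => p i * Q i j)
          (g := fun i j => p i * degree p Q j) (fun j => by
            rw [← sum_mul, hpsum, one_mul, degree]
            exact Finset.sum_congr rfl fun i _ => by rw [hQ]) hG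
    _ = weightedHom p hQ E (a + Pi.single w 1) := Finset.sum_congr rfl fun x _ => by
        rw [hshift, hsplit]; ring

theorem weightedHom_empty_single (hpsum : ∑ i, p i = 1) (v : V) (A : ℕ) :
    weightedHom p hQ (∅ : Finset (Sym2 V)) (Pi.single v A) = ∑ i, p i * degree p Q i ^ A := by
  simp only [weightedHom, prod_empty, mul_one]
  rw [← Fintype.prod_sum fun w i => p i * degree p Q i ^ (Pi.single v A : V → ℕ) w]
  refine (prod_eq_single v (fun w _ hw => ?_) (by simp)).trans (by simp)
  simp [Pi.single_eq_of_ne hw, hpsum]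

theorem weightedHom_le_of_forall_single (hp : ∀ i, 0 ≤ p i) (hQnn : ∀ i j, 0 ≤ Q i j)
    {E : Finset (Sym2 V)} {a : V → ℕ} (ha : 0 < ∑ v, a v) {B : ℝ}
    (hB : ∀ v, a v ≠ 0 → weightedHom p hQ E (Pi.single v (∑ v, a v)) ≤ B) :
    weightedHom p hQ E a ≤ B := by
  set A := ∑ v, a v
  have hA : (0 : ℝ) < A := by exact_mod_cast ha
  refine le_of_mul_le_mul_left ?_ hA
  calc (A : ℝ) * weightedHom p hQ E a
      = ∑ x : V → α, (∏ v, p (x v)) * (A * ∏ v, degree p Q (x v) ^ a v) *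
          ∏ e ∈ E, edgeWeight hQ x e := by
        rw [weightedHom, mul_sum]
        exact Finset.sum_congr rfl fun x _ => by rw [prod_mul_distrib]; ring
    _ ≤ ∑ x : V → α, (∏ v, p (x v)) * (∑ v, (a v : ℝ) * degree p Q (x v) ^ A) *
          ∏ e ∈ E, edgeWeight hQ x e := by
        refine sum_le_sum fun x _ => ?_
        gcongr
        · exact prod_nonneg fun e _ => edgeWeight_nonneg hQ hQnn x e
        · exact prod_nonneg fun v _ => hp _
        · exact Real.geom_mean_le_arith_mean_nat_weighted _ a fun v _ => degree_nonneg hp hQnn _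
    _ = ∑ v, (a v : ℝ) * weightedHom p hQ E (Pi.single v A) := by
        simp only [weightedHom, mul_sum, sum_mul]
        rw [sum_comm]
        refine Finset.sum_congr rfl fun v _ => Finset.sum_congr rfl fun x _ => ?_
        simp only [prod_mul_distrib]
        simp [Pi.single_apply, pow_ite]
        ring
    _ ≤ ∑ v, (a v : ℝ) * B := by
        refine sum_le_sum fun v _ => ?_
        rcases eq_or_ne (a v) 0 with hv | hv
        · simp [hv]
        · exact mul_le_mul_of_nonneg_left (hB v hv) (Nat.cast_nonneg _)
    _ = A * B := by rw [← sum_mul, Nat.cast_sum]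

theorem IsTreeOn.weightedHom_single_le (hp : ∀ i, 0 ≤ p i) (hpsum : ∑ i, p i = 1)
    (hQnn : ∀ i j, 0 ≤ Q i j) {s : Finset V} {E : Finset (Sym2 V)} (h : IsTreeOn s E)
    {v : V} (hv : v ∈ s) (A : ℕ) :
    weightedHom p hQ E (Pi.single v A) ≤ ∑ i, p i * degree p Q i ^ (E.card + A) := by
  rcases s.eq_singleton_or_nontrivial hv with rfl | hs
  · obtain rfl : E = ∅ := by simpa using h.card_add_one
    simp [weightedHom_empty_single hQ hpsum]
  obtain ⟨u, hu, huv, w, hw, E', h', rfl⟩ := h.exists_leaf_ne hs v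
  have hu' : ∀ e ∈ E', u ∉ e := fun e he hue => notMem_erase u s (h'.mem_of_mem_edge he hue)
  have hcard : (insert s(u, w) E').card = E'.card + 1 :=
    card_insert_of_notMem fun he => hu' _ he (Sym2.mem_mk_left u w)
  have hsum : ∑ v', (Pi.single v A + Pi.single w 1 : V → ℕ) v' = A + 1 := by
    simp [sum_add_distrib]
  rw [weightedHom_insert_leaf hQ hpsum (ne_of_mem_erase hw) hu' (Pi.single_eq_of_ne huv _),
    hcard, add_assoc, add_comm 1 A]
  refine weightedHom_le_of_forall_single hQ hp hQnn (by omega) fun v' hv' => ?_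
  have hv's : v' ∈ s.erase u := by
    rcases eq_or_ne v' v with rfl | h₁
    · exact mem_erase.mpr ⟨huv.symm, hv⟩
    rcases eq_or_ne v' w with rfl | h₂
    · exact hw
    simp [Pi.single_eq_of_ne h₁, Pi.single_eq_of_ne h₂] at hv'
  rw [hsum]
  exact h'.weightedHom_single_le hp hpsum hQnn hv's (A + 1)
termination_by s.card
decreasing_by exact card_erase_lt_of_mem hu

theorem weightedHom_star (hpsum : ∑ i, p i = 1) {c : V} {L : Finset V} (hc : c ∉ L) (m : ℕ) :
    weightedHom p hQ (L.image fun v => s(c, v)) (Pi.single c m) =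
      ∑ i, p i * degree p Q i ^ (m + L.card) := by
  induction L using Finset.induction_on generalizing m with
  | empty => simpa using weightedHom_empty_single hQ hpsum c m
  | @insert u L hu ih =>
    have hcu : c ≠ u := fun h => hc (h ▸ mem_insert_self u L)
    have hleaf : ∀ e ∈ L.image fun v => s(c, v), u ∉ e := by
      simp only [mem_image, forall_exists_index, and_imp, forall_apply_eq_imp_iff₂,
        Sym2.mem_iff, not_or]
      exact fun v hv => ⟨hcu.symm, (ne_of_mem_of_not_mem hv hu).symm⟩
    rw [image_insert, Sym2.eq_swap, weightedHom_insert_leaf hQ hpsum hcu hleaf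
      (Pi.single_eq_of_ne hcu.symm _), ← Pi.single_add, ih fun h => hc (mem_insert_of_mem h),
      card_insert_of_notMem hu, add_assoc, add_comm 1]

end Weight

theorem Phi_eq_weightedHom {k : ℕ} (p : Fin k → ℝ) {Q : Fin k → Fin k → ℝ}
    (hQ : ∀ i j, Q i j = Q j i) {V : Type} [Fintype V] [DecidableEq V] (H : SimpleGraph V)
    [DecidableRel H.Adj] : Phi p Q hQ H = weightedHom p hQ H.edgeFinset 0 := by
  simp [Phi, weightedHom, edgeWeight]

theorem starGraph_edgeFinset (t : ℕ) :
    (StarGraph t).edgeFinset = (univ.erase 0).image fun v => s(0, v) := by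
  ext e
  induction e using Sym2.ind with
  | _ u v =>
    simp only [SimpleGraph.mem_edgeFinset, SimpleGraph.mem_edgeSet, mem_image, mem_erase,
      mem_univ, and_true, Sym2.eq_iff]
    change u ≠ v ∧ (u = 0 ∨ v = 0) ↔ _
    constructor
    · rintro ⟨huv, rfl | rfl⟩
      · exact ⟨v, huv.symm, Or.inl ⟨rfl, rfl⟩⟩
      · exact ⟨u, huv, Or.inr ⟨rfl, rfl⟩⟩
    · rintro ⟨w, hw, ⟨rfl, rfl⟩ | ⟨rfl, rfl⟩⟩
      · exact ⟨hw.symm, Or.inl rfl⟩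
      · exact ⟨hw, Or.inr rfl⟩

theorem Phi_starGraph {k : ℕ} {p : Fin k → ℝ} (hpsum : ∑ i, p i = 1)
    {Q : Fin k → Fin k → ℝ} (hQ : ∀ i j, Q i j = Q j i) (t : ℕ) :
    Phi p Q hQ (StarGraph t) = ∑ i, p i * degree p Q i ^ t := by
  rw [Phi_eq_weightedHom, starGraph_edgeFinset, ← Pi.single_zero 0,
    weightedHom_star hQ hpsum (notMem_erase 0 _)]
  simp

end BlockModel

open BlockModel in
theorem stmt3_general {k : ℕ} (p : Fin k → ℝ) (Q : Fin k → Fin k → ℝ)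
    (hp : ∀ i, 0 ≤ p i) (hpsum : ∑ i, p i = 1)
    (hQ : ∀ i j, Q i j = Q j i) (hQbd : ∀ i j, |Q i j| ≤ 1)
    (hQnn : ∀ i j, 0 ≤ Q i j)
    (D : ℕ) (hD : 1 ≤ D)
    {V : Type} [Fintype V] [DecidableEq V] (H : SimpleGraph V) [DecidableRel H.Adj]
    (hconn : H.Connected) (hE1 : 1 ≤ H.edgeFinset.card) (hED : H.edgeFinset.card ≤ D) :
    Psi p Q hQ H ≤
      (Finset.Icc 1 D).sup' (Finset.nonempty_Icc.mpr hD)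
        (fun t => Psi p Q hQ (StarGraph t)) := by
  obtain ⟨E, hEH, hT⟩ := hconn.exists_isTreeOn_univ
  have hcard : E.card + 1 = Fintype.card V := hT.card_add_one
  have hV : 1 < Fintype.card V := by
    obtain ⟨e, he⟩ := card_pos.mp hE1
    induction e using Sym2.ind with
    | _ u v => exact Fintype.one_lt_card_iff.mpr ⟨u, v, (H.mem_edgeFinset.mp he).ne⟩
  have hEmem : E.card ∈ Icc 1 D := mem_Icc.mpr ⟨by omega, (card_le_card hEH).trans hED⟩
  have hPhi : Phi p Q hQ H ≤ Phi p Q hQ (StarGraph E.card) := by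
    obtain ⟨v⟩ := hconn.nonempty
    calc Phi p Q hQ H = weightedHom p hQ H.edgeFinset 0 := Phi_eq_weightedHom p hQ H
      _ ≤ weightedHom p hQ E (Pi.single v 0) := by
        rw [Pi.single_zero]
        exact weightedHom_anti hQ hp hQnn (fun i j => (abs_le.mp (hQbd i j)).2) hEH 0
      _ ≤ ∑ i, p i * degree p Q i ^ (E.card + 0) :=
        hT.weightedHom_single_le hQ hp hpsum hQnn (mem_univ v) 0
      _ = Phi p Q hQ (StarGraph E.card) := (Phi_starGraph hpsum hQ _).symm
  have hPsi : Psi p Q hQ H ≤ Psi p Q hQ (StarGraph E.card) := by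
    have hnn : 0 ≤ Phi p Q hQ H := by
      rw [Phi_eq_weightedHom]; exact weightedHom_nonneg hQ hp hQnn _ _
    rw [Psi, Psi, Fintype.card_fin, ← hcard, Nat.cast_add_one]
    exact Real.rpow_le_rpow (abs_nonneg _) (abs_le_abs_of_nonneg hnn hPhi) (by positivity)
  exact hPsi.trans (le_sup' (fun t => Psi p Q hQ (StarGraph t)) hEmem)

/-- in non-negative SBMs, stars maximize the partition value among
connected graphs with at most D edges. -/
theorem stmt3 {k : ℕ} (hk : 1 ≤ k) (p : Fin k → ℝ) (Q : Fin k → Fin k → ℝ)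
    (hp : ∀ i, 0 ≤ p i) (hpsum : ∑ i, p i = 1)
    (hQ : ∀ i j, Q i j = Q j i) (hQbd : ∀ i j, |Q i j| ≤ 1)
    (hQnn : ∀ i j, 0 ≤ Q i j)
    (D : ℕ) (hD : 1 ≤ D)
    {V : Type} [Fintype V] [DecidableEq V] (H : SimpleGraph V) [DecidableRel H.Adj]
    (hconn : H.Connected) (hE1 : 1 ≤ H.edgeFinset.card) (hED : H.edgeFinset.card ≤ D) :
    Psi p Q hQ H ≤
      (Finset.Icc 1 D).sup' (Finset.nonempty_Icc.mpr hD)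
        (fun t => Psi p Q hQ (StarGraph t)) :=
  stmt3_general p Q hp hpsum hQ hQbd hQnn D hD H hconn hE1 hED
end

section
/- Let c > 0 and let (p,Q) be a block-model parameter pair on k communities with p i ≥ c for every i ∈ Fin k. Then Φ_{p,Q}(Cyc_4) ≥ c^4 · max_{i,j ∈ Fin k} (Q i j)^4; in particular Ψ_{p,Q}(Cyc_4) ≥ c · max_{i,j ∈ Fin k} |Q i j|. -/
set_option linter.unusedVariables false

open Finset

open Finset

/-!
Grouping the labelings of the 4-cycle by the labels `a`, `c` of two opposite vertices writes
`Φ(Cyc₄)` as `∑ a c, p a * p c * (∑ b, p b * Q a b * Q b c) ^ 2`, a sum of nonnegative terms.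
Keeping only the term `a = c = i`, and inside it only the walk through `b = j`, gives
`Φ(Cyc₄) ≥ (p i * p j * Q i j ^ 2) ^ 2 ≥ c ^ 4 * Q i j ^ 4`; taking fourth roots gives the bound on `Ψ`.
-/

theorem sum_fun_fin_succ {β M : Type*} [Fintype β] [AddCommMonoid M] {n : ℕ}
    (f : (Fin (n + 1) → β) → M) :
    ∑ x, f x = ∑ a, ∑ y : Fin n → β, f (Fin.cons a y) :=
  (Fintype.sum_equiv (Fin.consEquiv fun _ => β) _ _ fun _ => rfl).symm.trans
    (Fintype.sum_prod_type _)

theorem sum_fun_fin_four {β M : Type*} [Fintype β] [AddCommMonoid M]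
    (f : (Fin 4 → β) → M) :
    ∑ x, f x = ∑ a, ∑ b, ∑ c, ∑ d, f ![a, b, c, d] := by
  simp only [sum_fun_fin_succ, Fintype.sum_unique]
  rfl

theorem edgeFinset_Cyc4 : Cyc4.edgeFinset = {s(0, 1), s(1, 2), s(2, 3), s(0, 3)} := by decide

theorem prod_edgeFinset_Cyc4 {M : Type*} [CommMonoid M] (f : Sym2 (Fin 4) → M) :
    ∏ e ∈ Cyc4.edgeFinset, f e = f s(0, 1) * f s(1, 2) * f s(2, 3) * f s(0, 3) := by
  simp [edgeFinset_Cyc4, mul_assoc]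

section FourCycle

variable {k : ℕ} {p : Fin k → ℝ} (Q : Fin k → Fin k → ℝ) (hQ : ∀ i j, Q i j = Q j i)

theorem Phi_Cyc4 :
    Phi p Q hQ Cyc4 = ∑ a, ∑ c, p a * p c * (∑ b, p b * Q a b * Q b c) ^ 2 := by
  rw [Phi, sum_fun_fin_four]
  refine Fintype.sum_congr _ _ fun a => ?_
  rw [sum_comm]
  refine Fintype.sum_congr _ _ fun c => ?_
  rw [sq, sum_mul_sum, mul_sum]
  refine Fintype.sum_congr _ _ fun b => ?_
  rw [mul_sum]
  refine Fintype.sum_congr _ _ fun d => ?_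
  simp only [Fin.prod_univ_four, prod_edgeFinset_Cyc4, Sym2.lift_mk]
  change p a * p b * p c * p d * (Q a b * Q b c * Q c d * Q a d) = _
  rw [hQ d c]
  ring

theorem sq_mul_sq_le_Phi_Cyc4 (hp : ∀ i, 0 ≤ p i) (i j : Fin k) :
    (p i * p j * Q i j ^ 2) ^ 2 ≤ Phi p Q hQ Cyc4 := by
  have hwalk : p j * Q i j ^ 2 ≤ ∑ b, p b * Q i b * Q b i := by
    simp_rw [← hQ i, mul_assoc, ← sq]
    exact single_le_sum (f := fun b => p b * Q i b ^ 2)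
      (fun b _ => mul_nonneg (hp b) (sq_nonneg _)) (mem_univ j)
  have hterm : ∀ a c, 0 ≤ p a * p c * (∑ b, p b * Q a b * Q b c) ^ 2 := fun a c =>
    mul_nonneg (mul_nonneg (hp a) (hp c)) (sq_nonneg _)
  calc (p i * p j * Q i j ^ 2) ^ 2 = p i * p i * (p j * Q i j ^ 2) ^ 2 := by ring
    _ ≤ p i * p i * (∑ b, p b * Q i b * Q b i) ^ 2 := by
        gcongr
        · exact mul_nonneg (hp i) (hp i)
        · exact mul_nonneg (hp j) (sq_nonneg _)
    _ ≤ ∑ c, p i * p c * (∑ b, p b * Q i b * Q b c) ^ 2 :=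
        single_le_sum (fun c _ => hterm i c) (mem_univ i)
    _ ≤ Phi p Q hQ Cyc4 := by
        rw [Phi_Cyc4]
        exact single_le_sum (f := fun a => ∑ c, p a * p c * (∑ b, p b * Q a b * Q b c) ^ 2)
          (fun a _ => sum_nonneg fun c _ => hterm a c) (mem_univ i)

theorem pow_four_mul_pow_four_le_Phi_Cyc4 {c : ℝ} (hc : 0 ≤ c) (hpc : ∀ i, c ≤ p i)
    (i j : Fin k) : c ^ 4 * Q i j ^ 4 ≤ Phi p Q hQ Cyc4 :=
  calc c ^ 4 * Q i j ^ 4 = (c * c * Q i j ^ 2) ^ 2 := by ring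
    _ ≤ (p i * p j * Q i j ^ 2) ^ 2 := by
        have hcc : c * c ≤ p i * p j := mul_le_mul (hpc i) (hpc j) hc (hc.trans (hpc i))
        gcongr
    _ ≤ Phi p Q hQ Cyc4 := sq_mul_sq_le_Phi_Cyc4 Q hQ (fun i => hc.trans (hpc i)) i j

end FourCycle

theorem stmt5_general {k : ℕ} (hk : 1 ≤ k) (c : ℝ) (hc : 0 < c)
    (p : Fin k → ℝ) (Q : Fin k → Fin k → ℝ)
    (hQ : ∀ i j, Q i j = Q j i)
    (hpc : ∀ i, c ≤ p i) :
    Phi p Q hQ Cyc4 ≥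
      c ^ 4 * Finset.univ.sup'
        (Finset.univ_nonempty_iff.mpr ⟨((⟨0, hk⟩ : Fin k), (⟨0, hk⟩ : Fin k))⟩)
        (fun ij : Fin k × Fin k => (Q ij.1 ij.2) ^ 4) ∧
    Psi p Q hQ Cyc4 ≥
      c * Finset.univ.sup'
        (Finset.univ_nonempty_iff.mpr ⟨((⟨0, hk⟩ : Fin k), (⟨0, hk⟩ : Fin k))⟩)
        (fun ij : Fin k × Fin k => |Q ij.1 ij.2|) := by
  have hbound := pow_four_mul_pow_four_le_Phi_Cyc4 Q hQ hc.le hpc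
  constructor
  · obtain ⟨⟨i, j⟩, -, hij⟩ := exists_mem_eq_sup' _ fun ij : Fin k × Fin k => Q ij.1 ij.2 ^ 4
    rw [hij]
    exact hbound i j
  · obtain ⟨⟨i, j⟩, -, hij⟩ := exists_mem_eq_sup' _ fun ij : Fin k × Fin k => |Q ij.1 ij.2|
    rw [hij, Psi, Fintype.card_fin, ge_iff_le,
      Real.le_rpow_inv_iff_of_pos (by positivity) (abs_nonneg _) (by norm_num)]
    calc (c * |Q i j|) ^ (4 : ℝ) = c ^ 4 * Q i j ^ 4 := by
          rw [Real.rpow_ofNat, mul_pow, (by decide : Even 4).pow_abs]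
      _ ≤ |Phi p Q hQ Cyc4| := (hbound i j).trans (le_abs_self _)

/-- lower bound on the signed 4-cycle coefficient under non-vanishing
community probabilities. -/
theorem stmt5 {k : ℕ} (hk : 1 ≤ k) (c : ℝ) (hc : 0 < c)
    (p : Fin k → ℝ) (Q : Fin k → Fin k → ℝ)
    (hp : ∀ i, 0 ≤ p i) (hpsum : ∑ i, p i = 1)
    (hQ : ∀ i j, Q i j = Q j i) (hQbd : ∀ i j, |Q i j| ≤ 1)
    (hpc : ∀ i, c ≤ p i) :
    Phi p Q hQ Cyc4 ≥
      c ^ 4 * Finset.univ.sup'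
        (Finset.univ_nonempty_iff.mpr ⟨((⟨0, hk⟩ : Fin k), (⟨0, hk⟩ : Fin k))⟩)
        (fun ij : Fin k × Fin k => (Q ij.1 ij.2) ^ 4) ∧
    Psi p Q hQ Cyc4 ≥
      c * Finset.univ.sup'
        (Finset.univ_nonempty_iff.mpr ⟨((⟨0, hk⟩ : Fin k), (⟨0, hk⟩ : Fin k))⟩)
        (fun ij : Fin k × Fin k => |Q ij.1 ij.2|) :=
  stmt5_general hk c hc p Q hQ hpc
end

section
/- Let (p,Q) be a block-model parameter pair on 2 communities with 0 < p₁ ≤ p₂, let T ≥ 1 be a natural number, and set C = 128, μ = p₁Q₁₁ + p₂Q₁₂, λ = p₁Q₁₂ + p₂Q₂₂. Assume: (i) (4C²)^T · |p₁·μ^T + p₂·λ^T| ≤ p₁·(p₁|Q₁₁| + p₂|Q₁₂|)^T + p₂·(p₁|Q₁₂| + p₂|Q₂₂|)^T; and (ii) either (p₁|Q₁₁| + p₂|Q₁₂|)^T ≥ C^T · |μ|^T or (p₁|Q₁₂| + p₂|Q₂₂|)^T ≥ C^T · |λ|^T. Then |Q₁₂| ≤ C · p₁ · |Q₁₁|.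 -/
set_option linter.unusedVariables false

open Finset


/-- within-community cancellations force |Q₁₂| ≤ C p₁ |Q₁₁| (C = 128). -/
theorem stmt13 (p : Fin 2 → ℝ) (Q : Fin 2 → Fin 2 → ℝ)
    (hp : ∀ i, 0 ≤ p i) (hpsum : ∑ i, p i = 1)
    (hQ : ∀ i j, Q i j = Q j i) (hQbd : ∀ i j, |Q i j| ≤ 1)
    (hp0 : 0 < p 0) (hple : p 0 ≤ p 1)
    (T : ℕ) (hT : 1 ≤ T)
    (h1 : (4 * 128 ^ 2 : ℝ) ^ T *
        |p 0 * (p 0 * Q 0 0 + p 1 * Q 0 1) ^ T + p 1 * (p 0 * Q 0 1 + p 1 * Q 1 1) ^ T| ≤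
      p 0 * (p 0 * |Q 0 0| + p 1 * |Q 0 1|) ^ T +
        p 1 * (p 0 * |Q 0 1| + p 1 * |Q 1 1|) ^ T)
    (h2 : (p 0 * |Q 0 0| + p 1 * |Q 0 1|) ^ T ≥
            (128 : ℝ) ^ T * |p 0 * Q 0 0 + p 1 * Q 0 1| ^ T ∨
          (p 0 * |Q 0 1| + p 1 * |Q 1 1|) ^ T ≥
            (128 : ℝ) ^ T * |p 0 * Q 0 1 + p 1 * Q 1 1| ^ T) :
    |Q 0 1| ≤ 128 * p 0 * |Q 0 0| := by
  have hsum : p 0 + p 1 = 1 := by simpa [Fin.sum_univ_two] using hpsum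
  have hp1 : (0:ℝ) ≤ p 1 := hp 1
  have hq2 : (1:ℝ)/2 ≤ p 1 := by linarith
  have hp1le : p 1 ≤ 1 := by linarith
  have hTne : T ≠ 0 := by omega
  by_cases hb0 : Q 0 1 = 0
  · have h0 : (0:ℝ) ≤ 128 * p 0 * |Q 0 0| :=
      mul_nonneg (by linarith) (abs_nonneg _)
    simpa [hb0] using h0
  have hb : 0 < |Q 0 1| := abs_pos.mpr hb0
  set μ := p 0 * Q 0 0 + p 1 * Q 0 1 with hμdef
  set lam := p 0 * Q 0 1 + p 1 * Q 1 1 with hlamdef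
  set A := p 0 * |Q 0 0| + p 1 * |Q 0 1| with hAdef
  set B := p 0 * |Q 0 1| + p 1 * |Q 1 1| with hBdef
  have hA0 : 0 ≤ A := by
    have := abs_nonneg (Q 0 0); have := abs_nonneg (Q 0 1)
    have h1' : 0 ≤ p 0 * |Q 0 0| := mul_nonneg hp0.le (abs_nonneg _)
    have h2' : 0 ≤ p 1 * |Q 0 1| := mul_nonneg hp1 (abs_nonneg _)
    rw [hAdef]; linarith
  have hB0 : 0 ≤ B := by
    have h1' : 0 ≤ p 0 * |Q 0 1| := mul_nonneg hp0.le (abs_nonneg _)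
    have h2' : 0 ≤ p 1 * |Q 1 1| := mul_nonneg hp1 (abs_nonneg _)
    rw [hBdef]; linarith
  -- lower bound on |μ| : p1|b| - p0|a| ≤ |μ|
  have hmlb : p 1 * |Q 0 1| - p 0 * |Q 0 0| ≤ |μ| := by
    have h := abs_sub_abs_le_abs_sub (p 1 * Q 0 1) (-(p 0 * Q 0 0))
    have he : p 1 * Q 0 1 - -(p 0 * Q 0 0) = μ := by rw [hμdef]; ring
    rw [he, abs_neg, abs_mul, abs_mul, abs_of_nonneg hp1, abs_of_nonneg hp0.le] at h
    linarith
  -- lower bound on |lam| : p1|c| - p0|b| ≤ |lam|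
  have hllb : p 1 * |Q 1 1| - p 0 * |Q 0 1| ≤ |lam| := by
    have h := abs_sub_abs_le_abs_sub (p 1 * Q 1 1) (-(p 0 * Q 0 1))
    have he : p 1 * Q 1 1 - -(p 0 * Q 0 1) = lam := by rw [hlamdef]; ring
    rw [he, abs_neg, abs_mul, abs_mul, abs_of_nonneg hp1, abs_of_nonneg hp0.le] at h
    linarith
  rcases h2 with hc | hc
  · -- Case 1 : A ≥ 128 |μ|, direct.
    have h128 : 128 * |μ| ≤ A := by
      refine le_of_pow_le_pow_left₀ hTne hA0 ?_
      rw [mul_pow]; exact hc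
    have h127 : 127 * (p 1 * |Q 0 1|) ≤ 129 * (p 0 * |Q 0 0|) := by
      rw [hAdef] at h128; linarith
    have hhalf : |Q 0 1| ≤ 2 * (p 1 * |Q 0 1|) := by
      nlinarith [abs_nonneg (Q 0 1)]
    have hpa : 0 ≤ p 0 * |Q 0 0| := mul_nonneg hp0.le (abs_nonneg _)
    linarith
  · -- Case 2 : B ≥ 128 |lam|, contradiction with h1 and the negation.
    by_contra hcon
    push_neg at hcon
    -- hcon : 128 * p 0 * |Q 0 0| < |Q 0 1|
    have h128 : 128 * |lam| ≤ B := by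
      refine le_of_pow_le_pow_left₀ hTne hB0 ?_
      rw [mul_pow]; exact hc
    have hqc : 127 * (p 1 * |Q 1 1|) ≤ 129 * (p 0 * |Q 0 1|) := by
      rw [hBdef] at h128; linarith
    have hBle : B ≤ (256/127) * (p 0 * |Q 0 1|) := by
      rw [hBdef]; linarith
    have hlamle : |lam| ≤ (2/127) * (p 0 * |Q 0 1|) := by linarith
    have hμge : (63/128) * |Q 0 1| ≤ |μ| := by
      have hh : (1/2) * |Q 0 1| ≤ p 1 * |Q 0 1| :=
        mul_le_mul_of_nonneg_right hq2 (abs_nonneg _)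
      linarith [hmlb, hcon, hh]
    have hAle : A ≤ 2 * |Q 0 1| := by
      have hh : p 1 * |Q 0 1| ≤ 1 * |Q 0 1| :=
        mul_le_mul_of_nonneg_right hp1le (abs_nonneg _)
      rw [hAdef]
      linarith [hcon, hh]
    have hp0T : p 0 ^ T ≤ p 0 := by
      calc p 0 ^ T ≤ p 0 ^ 1 := pow_le_pow_of_le_one hp0.le (by linarith) hT
        _ = p 0 := pow_one _
    set t := |Q 0 1| with htdef
    have ht : 0 < t := hb
    -- E1 : 32256^T * (p0 * t^T) ≤ 65536^T * (p0 * |μ|^T)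
    have hμpow : ((63/128:ℝ) * t) ^ T ≤ |μ| ^ T :=
      pow_le_pow_left₀ (by positivity) hμge T
    have key1 : (32256:ℝ)^T * t^T = 65536^T * ((63/128) * t)^T := by
      rw [← mul_pow, ← mul_pow]; congr 1; ring
    have E1 : (32256:ℝ)^T * (p 0 * t^T) ≤ 65536^T * (p 0 * |μ|^T) := by
      calc (32256:ℝ)^T * (p 0 * t^T) = p 0 * ((32256:ℝ)^T * t^T) := by ring
        _ = p 0 * (65536^T * ((63/128) * t)^T) := by rw [key1]
        _ ≤ p 0 * (65536^T * |μ|^T) := by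
            refine mul_le_mul_of_nonneg_left ?_ hp0.le
            exact mul_le_mul_of_nonneg_left hμpow (by positivity)
        _ = 65536^T * (p 0 * |μ|^T) := by ring
    -- E2 : 65536^T * |lam|^T ≤ 1033^T * (p0 * t^T)
    have hlampow : |lam| ^ T ≤ ((2/127:ℝ) * (p 0 * t)) ^ T :=
      pow_le_pow_left₀ (abs_nonneg _) hlamle T
    have key2 : (65536:ℝ)^T * ((2/127) * (p 0 * t))^T = ((131072/127) * p 0)^T * t^T := by
      rw [← mul_pow, ← mul_pow]; congr 1; ring
    have l3 : ((131072/127:ℝ) * p 0) ^ T ≤ 1033 ^ T * p 0 := by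
      rw [mul_pow]
      exact mul_le_mul (pow_le_pow_left₀ (by norm_num) (by norm_num) T) hp0T
        (by positivity) (by positivity)
    have E2 : (65536:ℝ)^T * |lam|^T ≤ 1033^T * (p 0 * t^T) := by
      calc (65536:ℝ)^T * |lam|^T ≤ 65536^T * ((2/127) * (p 0 * t))^T :=
            mul_le_mul_of_nonneg_left hlampow (by positivity)
        _ = ((131072/127) * p 0)^T * t^T := key2
        _ ≤ (1033^T * p 0) * t^T :=
            mul_le_mul_of_nonneg_right l3 (by positivity)
        _ = 1033^T * (p 0 * t^T) := by ring
    -- E3 : p0 * A^T ≤ 2^T * (p0 * t^T)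
    have hApow : A ^ T ≤ (2 * t) ^ T := pow_le_pow_left₀ hA0 hAle T
    have E3 : p 0 * A^T ≤ (2:ℝ)^T * (p 0 * t^T) := by
      calc p 0 * A^T ≤ p 0 * (2*t)^T := mul_le_mul_of_nonneg_left hApow hp0.le
        _ = (2:ℝ)^T * (p 0 * t^T) := by rw [mul_pow]; ring
    -- E4 : p1 * B^T ≤ 3^T * (p0 * t^T)
    have hBpow : B ^ T ≤ ((256/127:ℝ) * (p 0 * t)) ^ T := pow_le_pow_left₀ hB0 hBle T
    have key4 : ((256/127:ℝ) * (p 0 * t))^T = ((256/127) * p 0)^T * t^T := by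
      rw [← mul_pow]; congr 1; ring
    have l4 : ((256/127:ℝ) * p 0) ^ T ≤ 3 ^ T * p 0 := by
      rw [mul_pow]
      exact mul_le_mul (pow_le_pow_left₀ (by norm_num) (by norm_num) T) hp0T
        (by positivity) (by positivity)
    have E4 : p 1 * B^T ≤ (3:ℝ)^T * (p 0 * t^T) := by
      have hBT : 0 ≤ B ^ T := pow_nonneg hB0 T
      calc p 1 * B^T ≤ 1 * B^T := mul_le_mul_of_nonneg_right hp1le hBT
        _ = B^T := one_mul _
        _ ≤ ((256/127) * (p 0 * t))^T := hBpow
        _ = ((256/127) * p 0)^T * t^T := key4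
        _ ≤ (3^T * p 0) * t^T := mul_le_mul_of_nonneg_right l4 (by positivity)
        _ = (3:ℝ)^T * (p 0 * t^T) := by ring
    -- lower bound for the absolute value in h1
    have hlow : p 0 * |μ|^T - |lam|^T ≤ |p 0 * μ^T + p 1 * lam^T| := by
      have h := abs_sub_abs_le_abs_sub (p 0 * μ^T) (p 0 * μ^T + p 1 * lam^T)
      have he : p 0 * μ^T - (p 0 * μ^T + p 1 * lam^T) = -(p 1 * lam^T) := by ring
      rw [he, abs_neg, abs_mul, abs_mul, abs_of_nonneg hp0.le, abs_of_nonneg hp1,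
        abs_pow, abs_pow] at h
      have hl1 : p 1 * |lam|^T ≤ |lam|^T := by
        have hh := mul_le_mul_of_nonneg_right hp1le (pow_nonneg (abs_nonneg lam) T)
        rwa [one_mul] at hh
      linarith
    have h65 : ((4 * 128 ^ 2 : ℝ)) ^ T = (65536:ℝ) ^ T := by norm_num
    have E5 : (65536:ℝ)^T * (p 0 * |μ|^T - |lam|^T) ≤ p 0 * A^T + p 1 * B^T := by
      calc (65536:ℝ)^T * (p 0 * |μ|^T - |lam|^T)
          ≤ (65536:ℝ)^T * |p 0 * μ^T + p 1 * lam^T| :=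
            mul_le_mul_of_nonneg_left hlow (by positivity)
        _ = (4 * 128 ^ 2 : ℝ)^T * |p 0 * μ^T + p 1 * lam^T| := by rw [h65]
        _ ≤ p 0 * A^T + p 1 * B^T := h1
    -- final numeric comparisons
    have h2l : (2:ℝ)^T ≤ 1033^T := pow_le_pow_left₀ (by norm_num) (by norm_num) T
    have h3l : (3:ℝ)^T ≤ 1033^T := pow_le_pow_left₀ (by norm_num) (by norm_num) T
    have h3p : (3:ℝ) ≤ 3^T := le_self_pow₀ (by norm_num) hTne
    have h31 : (3:ℝ) * 1033^T ≤ 3099^T := by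
      have hk : (3099:ℝ)^T = 3^T * 1033^T := by rw [← mul_pow]; norm_num
      rw [hk]
      exact mul_le_mul_of_nonneg_right h3p (by positivity)
    have hfin : (2:ℝ)^T + 3^T + 1033^T ≤ 3099^T := by linarith
    have hfin' : ((2:ℝ)^T + 3^T + 1033^T) * (p 0 * t^T) ≤ 3099^T * (p 0 * t^T) :=
      mul_le_mul_of_nonneg_right hfin (by positivity)
    have hstrict : (3099:ℝ)^T < 32256^T :=
      pow_lt_pow_left₀ (by norm_num) (by norm_num) hTne
    have hstrict' : (3099:ℝ)^T * (p 0 * t^T) < 32256^T * (p 0 * t^T) := by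
      have hpt : 0 < p 0 * t^T := by positivity
      exact mul_lt_mul_of_pos_right hstrict hpt
    linarith
end

section
/- For every C ≥ 128, every K > 0 and every odd natural number T ≥ 1 there exists a constant C' = C'(C,K,T) > 0 such that the following holds. Let (p,Q) be a block-model parameter pair on 2 communities with p₁ ≤ p₂, and set μ = p₁Q₁₁ + p₂Q₁₂, λ = p₁Q₁₂ + p₂Q₂₂. Assume: (i) p₁|Q₁₁| + p₂|Q₁₂| ≤ C|μ|; (ii) p₁|Q₁₂| + p₂|Q₂₂| ≤ C|λ|; (iii) (4C²)^T · |p₁μ^T + p₂λ^T| ≤ p₁|μ|^T + p₂|λ|^T; (iv) p₁|Q₁₁| ≤ |Q₁₂|; and (v) p₁ ≤ |Q₁₂|. Then every finite simple graph H with at least one vertex satisfying |Φ_{p,Q}(H)|^{1/|V(H)|} ≤ K · (p₁·(p₁|Q₁₁| + p₂|Q₁₂|)^T + p₂·(p₁|Q₁₂| + p₂|Q₂₂|)^T)^{1/(T+1)} also satisfies Ψ_{p,Q}(H) ≤ C' · Ψ_{p,Q}(Star_{T+1}). -/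
set_option linter.unusedVariables false

open Finset

open Finset

/-!
Write `S t = p₁|μ|^t + p₂|ν|^t`, with `ν` the paper's `λ`. Since `T + 1` is even,
`Φ(Star_{T+1}) = S (T+1)`, and by (i), (ii) the assumed bound on `Ψ(H)` is at most
`K (C^T S T)^{1/(T+1)}`. The cancellation (iii) forces the `μ`-term to carry a quarter of `S T`,
and (i), (v) with `p₂ ≥ 1/2` give `p₁ ≤ 2C|μ|`. Hence `S T ≤ 8C|μ|^{T+1}` while
`S (T+1) ≥ |μ| S T / 4`, so `(S T)^{T+2} ≤ 2C·4^{T+2} (S (T+1))^{T+1}`: the `(T+1)`-st root of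
`S T` is at most a constant times the `(T+2)`-nd root of `S (T+1)`.
-/

lemma edgeFinset_starGraph (t : ℕ) :
    (StarGraph t).edgeFinset = univ.image fun l : Fin t => s(0, l.succ) := by
  ext e
  induction e with
  | _ a b =>
    simp only [SimpleGraph.mem_edgeFinset, SimpleGraph.mem_edgeSet, mem_image, mem_univ, true_and]
    constructor
    · rintro ⟨hab, rfl | rfl⟩
      · obtain ⟨l, rfl⟩ := Fin.exists_succ_eq_of_ne_zero (Ne.symm hab)
        exact ⟨l, rfl⟩
      · obtain ⟨l, rfl⟩ := Fin.exists_succ_eq_of_ne_zero hab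
        exact ⟨l, Sym2.eq_swap⟩
    · rintro ⟨l, heq⟩
      rcases Sym2.eq_iff.mp heq with ⟨rfl, rfl⟩ | ⟨h, rfl⟩
      · exact ⟨(Fin.succ_ne_zero l).symm, Or.inl rfl⟩
      · exact ⟨fun hab => Fin.succ_ne_zero l (hab.trans h.symm), Or.inr h.symm⟩

lemma phi_starGraph {k : ℕ} (p : Fin k → ℝ) (Q : Fin k → Fin k → ℝ)
    (hQ : ∀ i j, Q i j = Q j i) (t : ℕ) :
    Phi p Q hQ (StarGraph t) = ∑ i, p i * (∑ j, p j * Q i j) ^ t := by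
  have hinj : Set.InjOn (fun l : Fin t => s((0 : Fin (t + 1)), l.succ))
      (univ : Finset (Fin t)) := by
    intro u _ v _ h
    rcases Sym2.eq_iff.mp h with ⟨-, h⟩ | ⟨h, -⟩
    · exact Fin.succ_injective _ h
    · exact absurd h.symm (Fin.succ_ne_zero v)
  have hterm : ∀ x : Fin (t + 1) → Fin k,
      (∏ v, p (x v)) * ∏ e ∈ (StarGraph t).edgeFinset,
          Sym2.lift ⟨fun u v => Q (x u) (x v), fun u v => hQ (x u) (x v)⟩ e
        = p (x 0) * ∏ l : Fin t, p (x l.succ) * Q (x 0) (x l.succ) := by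
    intro x
    rw [edgeFinset_starGraph, prod_image hinj, Fin.prod_univ_succ, mul_assoc,
      ← prod_mul_distrib]
    rfl
  rw [Phi, Fintype.sum_congr _ _ hterm,
    ← (Fin.consEquiv fun _ : Fin (t + 1) => Fin k).sum_comp, Fintype.sum_prod_type]
  refine sum_congr rfl fun i _ => ?_
  simp only [Fin.consEquiv_apply, Fin.cons_zero, Fin.cons_succ, ← mul_sum]
  rw [Fintype.sum_pow]

lemma psi_starGraph_of_even {k : ℕ} {p : Fin k → ℝ} (Q : Fin k → Fin k → ℝ)
    (hQ : ∀ i j, Q i j = Q j i) (hp : ∀ i, 0 ≤ p i) {t : ℕ} (ht : Even t) :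
    Psi p Q hQ (StarGraph t) =
      (∑ i, p i * |∑ j, p j * Q i j| ^ t) ^ ((t + 1 : ℕ) : ℝ)⁻¹ := by
  simp only [Psi, phi_starGraph, Fintype.card_fin, ht.pow_abs]
  rw [abs_of_nonneg (sum_nonneg fun i _ => mul_nonneg (hp i) (ht.pow_nonneg _))]

lemma abs_add_abs_le_four_mul_abs_left (a b : ℝ) (h : 2 * |a + b| ≤ |a| + |b|) :
    |a| + |b| ≤ 4 * |a| := by
  have hb : |b| ≤ |a + b| + |a| := by simpa using abs_add_le (a + b) (-a)
  linarith

lemma rpow_inv_le_mul_rpow_inv_succ {x y c : ℝ} {n : ℕ} (hn : n ≠ 0) (hx : 0 ≤ x)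
    (hy : 0 ≤ y) (hc : 1 ≤ c) (h : x ^ (n + 1) ≤ c * y ^ n) :
    x ^ (n : ℝ)⁻¹ ≤ c * y ^ ((n + 1 : ℕ) : ℝ)⁻¹ := by
  refine le_of_pow_le_pow_left₀ (Nat.mul_ne_zero hn n.succ_ne_zero) (by positivity) ?_
  calc (x ^ (n : ℝ)⁻¹) ^ (n * (n + 1)) = x ^ (n + 1) := by
        rw [pow_mul, Real.rpow_inv_natCast_pow hx hn]
    _ ≤ c * y ^ n := h
    _ ≤ c ^ (n * (n + 1)) * y ^ n := by
        gcongr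
        exact le_self_pow₀ hc (Nat.mul_ne_zero hn n.succ_ne_zero)
    _ = (c * y ^ ((n + 1 : ℕ) : ℝ)⁻¹) ^ (n * (n + 1)) := by
        rw [mul_pow, mul_comm n, pow_mul (y ^ _),
          Real.rpow_inv_natCast_pow hy n.succ_ne_zero]

lemma pow_succ_succ_le_of_cancellation {p₀ p₁ m l c : ℝ} (T : ℕ) (hp₀ : 0 ≤ p₀)
    (hp₁ : 0 ≤ p₁) (hc : 0 ≤ c)
    (hcancel : 2 * |p₀ * m ^ T + p₁ * l ^ T| ≤ p₀ * |m| ^ T + p₁ * |l| ^ T)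
    (hpm : p₀ ≤ c * |m|) :
    (p₀ * |m| ^ T + p₁ * |l| ^ T) ^ (T + 2) ≤
      c * 4 ^ (T + 2) * (p₀ * |m| ^ (T + 1) + p₁ * |l| ^ (T + 1)) ^ (T + 1) := by
  set S := p₀ * |m| ^ T + p₁ * |l| ^ T
  have habs : ∀ {q : ℝ} (a : ℝ), 0 ≤ q → |q * a ^ T| = q * |a| ^ T := fun a hq => by
    rw [abs_mul, abs_of_nonneg hq, abs_pow]
  have hdom : S ≤ 4 * (p₀ * |m| ^ T) := by
    have := abs_add_abs_le_four_mul_abs_left (p₀ * m ^ T) (p₁ * l ^ T)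
      (by rwa [habs m hp₀, habs l hp₁])
    rwa [habs m hp₀, habs l hp₁] at this
  have hlow : S * |m| / 4 ≤ p₀ * |m| ^ (T + 1) + p₁ * |l| ^ (T + 1) := by
    have : 0 ≤ p₁ * |l| ^ (T + 1) := by positivity
    have := mul_le_mul_of_nonneg_right hdom (abs_nonneg m)
    rw [pow_succ]
    linarith
  have hS : 0 ≤ S := by positivity
  clear_value S
  calc S ^ (T + 2) = S * S ^ (T + 1) := pow_succ' S (T + 1)
    _ ≤ 4 * (p₀ * |m| ^ T) * S ^ (T + 1) := by gcongr
    _ ≤ 4 * ((c * |m|) * |m| ^ T) * S ^ (T + 1) := by gcongr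
    _ = c * 4 ^ (T + 2) * (S * |m| / 4) ^ (T + 1) := by
        rw [div_pow]
        field_simp
        ring
    _ ≤ _ := by gcongr

lemma rpow_inv_le_of_cancellation {p₀ p₁ m l A B c : ℝ} (T : ℕ) (hp₀ : 0 ≤ p₀)
    (hp₁ : 0 ≤ p₁) (hc : 1 ≤ c) (hA₀ : 0 ≤ A) (hB₀ : 0 ≤ B) (hA : A ≤ c * |m|)
    (hB : B ≤ c * |l|)
    (hcancel : 2 * |p₀ * m ^ T + p₁ * l ^ T| ≤ p₀ * |m| ^ T + p₁ * |l| ^ T)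
    (hpm : p₀ ≤ 2 * c * |m|) :
    (p₀ * A ^ T + p₁ * B ^ T) ^ ((T + 1 : ℕ) : ℝ)⁻¹ ≤
      c ^ (T * (T + 2)) * (2 * c * 4 ^ (T + 2)) *
        (p₀ * |m| ^ (T + 1) + p₁ * |l| ^ (T + 1)) ^ ((T + 1 + 1 : ℕ) : ℝ)⁻¹ := by
  have hAB : p₀ * A ^ T + p₁ * B ^ T ≤ c ^ T * (p₀ * |m| ^ T + p₁ * |l| ^ T) :=
    calc _ ≤ p₀ * (c * |m|) ^ T + p₁ * (c * |l|) ^ T := by gcongr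
      _ = _ := by ring
  have hpow : (c ^ T * (p₀ * |m| ^ T + p₁ * |l| ^ T)) ^ (T + 1 + 1) ≤
      c ^ (T * (T + 2)) * (2 * c * 4 ^ (T + 2)) *
        (p₀ * |m| ^ (T + 1) + p₁ * |l| ^ (T + 1)) ^ (T + 1) := by
    have := pow_succ_succ_le_of_cancellation T hp₀ hp₁ (by positivity) hcancel hpm
    calc _ = c ^ (T * (T + 2)) * (p₀ * |m| ^ T + p₁ * |l| ^ T) ^ (T + 2) := by
          rw [mul_pow, ← pow_mul]
      _ ≤ _ := by rw [mul_assoc]; gcongr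
  have hc' : 1 ≤ c ^ (T * (T + 2)) * (2 * c * 4 ^ (T + 2)) :=
    one_le_mul_of_one_le_of_one_le (one_le_pow₀ hc)
      (one_le_mul_of_one_le_of_one_le (by linarith) (one_le_pow₀ (by norm_num)))
  calc _ ≤ (c ^ T * (p₀ * |m| ^ T + p₁ * |l| ^ T)) ^ ((T + 1 : ℕ) : ℝ)⁻¹ := by gcongr
    _ ≤ _ :=
      rpow_inv_le_mul_rpow_inv_succ T.succ_ne_zero (by positivity) (by positivity) hc' hpow

/-- between-community cancellations with p₁ ≤ |Q₁₂|:
Star_{T+1} dominates. -/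
theorem stmt15 (C : ℝ) (hC : 128 ≤ C) (K : ℝ) (hK : 0 < K)
    (T : ℕ) (hT : 1 ≤ T) (hTodd : Odd T) :
    ∃ C' : ℝ, 0 < C' ∧
      ∀ (p : Fin 2 → ℝ) (Q : Fin 2 → Fin 2 → ℝ),
        (∀ i, 0 ≤ p i) → (∑ i, p i = 1) →
        ∀ (hQ : ∀ i j, Q i j = Q j i),
        (∀ i j, |Q i j| ≤ 1) → p 0 ≤ p 1 →
        p 0 * |Q 0 0| + p 1 * |Q 0 1| ≤ C * |p 0 * Q 0 0 + p 1 * Q 0 1| →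
        p 0 * |Q 0 1| + p 1 * |Q 1 1| ≤ C * |p 0 * Q 0 1 + p 1 * Q 1 1| →
        (4 * C ^ 2) ^ T *
            |p 0 * (p 0 * Q 0 0 + p 1 * Q 0 1) ^ T +
              p 1 * (p 0 * Q 0 1 + p 1 * Q 1 1) ^ T| ≤
          p 0 * |p 0 * Q 0 0 + p 1 * Q 0 1| ^ T +
            p 1 * |p 0 * Q 0 1 + p 1 * Q 1 1| ^ T →
        p 0 * |Q 0 0| ≤ |Q 0 1| → p 0 ≤ |Q 0 1| →
      ∀ (V : Type) [Fintype V] [DecidableEq V] (H : SimpleGraph V) [DecidableRel H.Adj],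
        Nonempty V →
        |Phi p Q hQ H| ^ ((Fintype.card V : ℝ)⁻¹) ≤
          K * (p 0 * (p 0 * |Q 0 0| + p 1 * |Q 0 1|) ^ T +
                p 1 * (p 0 * |Q 0 1| + p 1 * |Q 1 1|) ^ T) ^ (1 / ((T : ℝ) + 1)) →
        Psi p Q hQ H ≤ C' * Psi p Q hQ (StarGraph (T + 1)) := by
  have hC1 : 1 ≤ C := by linarith
  refine ⟨K * (C ^ (T * (T + 2)) * (2 * C * 4 ^ (T + 2))), by positivity, ?_⟩
  intro p Q hp hpsum hQ _ hple hμ hν hcancel _ hpQ V _ _ H _ _ hH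
  have hp₀ := hp 0
  have hp₁ := hp 1
  set μ := p 0 * Q 0 0 + p 1 * Q 0 1
  set ν := p 0 * Q 0 1 + p 1 * Q 1 1
  have hstar : Psi p Q hQ (StarGraph (T + 1)) =
      (p 0 * |μ| ^ (T + 1) + p 1 * |ν| ^ (T + 1)) ^ ((T + 1 + 1 : ℕ) : ℝ)⁻¹ := by
    rw [psi_starGraph_of_even Q hQ hp hTodd.add_one]
    simp only [Fin.sum_univ_two, hQ 1 0, μ, ν]
  have hhalf : 2 * |p 0 * μ ^ T + p 1 * ν ^ T| ≤ p 0 * |μ| ^ T + p 1 * |ν| ^ T := by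
    have h2 : (2 : ℝ) ≤ (4 * C ^ 2) ^ T :=
      (by nlinarith : (2 : ℝ) ≤ 4 * C ^ 2).trans (le_self_pow₀ (by nlinarith) (by omega))
    exact (mul_le_mul_of_nonneg_right h2 (abs_nonneg _)).trans hcancel
  -- `p 1 ≥ 1/2`, so `p 0 ≤ |Q 0 1| ≤ 2 p 1 |Q 0 1| ≤ 2 C |μ|`
  have hpμ : p 0 ≤ 2 * C * |μ| := by
    have hsum : p 0 + p 1 = 1 := by simpa [Fin.sum_univ_two] using hpsum
    have := mul_nonneg hp₀ (abs_nonneg (Q 0 0))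
    nlinarith [abs_nonneg (Q 0 1)]
  have hroot := rpow_inv_le_of_cancellation T hp₀ hp₁ hC1 (by positivity) (by positivity)
    hμ hν hhalf hpμ
  have hexp : ((T + 1 : ℕ) : ℝ)⁻¹ = 1 / ((T : ℝ) + 1) := by push_cast; ring
  rw [hexp, ← hstar] at hroot
  rw [mul_assoc]
  exact hH.trans (mul_le_mul_of_nonneg_left hroot hK.le)
end

section
/- Let C ≥ 4 and let (p,Q) be a block-model parameter pair on 2 communities with p₁ ≤ p₂. Set μ = p₁Q₁₁ + p₂Q₁₂ and λ = p₁Q₁₂ + p₂Q₂₂. Assume: (i) p₁|Q₁₁| + p₂|Q₁₂| ≤ C|μ|; (ii) p₁|Q₁₂| + p₂|Q₂₂| ≤ C|λ|; (iii) 4C²·|p₁μ + p₂λ| ≤ p₁|μ| + p₂|λ|; and (iv) p₁|Q₁₁| ≤ |Q₁₂|. Then p₂·|λ| ≤ 4·p₁·|Q₁₂| and |Q₂₂| ≤ 8C·p₁·|Q₁₂|. -/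
set_option linter.unusedVariables false
set_option maxHeartbeats 1000000

open Finset


/-- in the remaining case of between-community cancellations,
p₂|λ| ≤ 4 p₁ |Q₁₂| and |Q₂₂| ≤ 8C p₁ |Q₁₂|. -/
theorem stmt18 (C : ℝ) (hC : 4 ≤ C) (p : Fin 2 → ℝ) (Q : Fin 2 → Fin 2 → ℝ)
    (hp : ∀ i, 0 ≤ p i) (hpsum : ∑ i, p i = 1)
    (hQ : ∀ i j, Q i j = Q j i) (hQbd : ∀ i j, |Q i j| ≤ 1)
    (hple : p 0 ≤ p 1)
    (h1 : p 0 * |Q 0 0| + p 1 * |Q 0 1| ≤ C * |p 0 * Q 0 0 + p 1 * Q 0 1|)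
    (h2 : p 0 * |Q 0 1| + p 1 * |Q 1 1| ≤ C * |p 0 * Q 0 1 + p 1 * Q 1 1|)
    (h3 : 4 * C ^ 2 *
        |p 0 * (p 0 * Q 0 0 + p 1 * Q 0 1) + p 1 * (p 0 * Q 0 1 + p 1 * Q 1 1)| ≤
      p 0 * |p 0 * Q 0 0 + p 1 * Q 0 1| + p 1 * |p 0 * Q 0 1 + p 1 * Q 1 1|)
    (h4 : p 0 * |Q 0 0| ≤ |Q 0 1|) :
    p 1 * |p 0 * Q 0 1 + p 1 * Q 1 1| ≤ 4 * p 0 * |Q 0 1| ∧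
      |Q 1 1| ≤ 8 * C * p 0 * |Q 0 1| := by
  have hsum : p 0 + p 1 = 1 := by simpa [Fin.sum_univ_two] using hpsum
  have ha : 0 ≤ p 0 := hp 0
  have hb : (1:ℝ)/2 ≤ p 1 := by linarith
  have hb1 : p 1 ≤ 1 := by linarith
  set a := p 0 with haa
  set b := p 1 with hbb
  set μ := a * Q 0 0 + b * Q 0 1 with hμ
  set lam := a * Q 0 1 + b * Q 1 1 with hlam
  set x := |Q 0 1| with hx
  have hx0 : 0 ≤ x := abs_nonneg _
  have hl0 : 0 ≤ |lam| := abs_nonneg _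
  have hm0 : 0 ≤ |μ| := abs_nonneg _
  have hq0 : 0 ≤ |Q 1 1| := abs_nonneg _
  have hb0 : (0:ℝ) ≤ b := by linarith
  have hC2 : (16:ℝ) ≤ C ^ 2 := by nlinarith
  -- key1 : b|lam| ≤ |aμ+bλ| + a|μ|
  have key1 : b * |lam| ≤ |a * μ + b * lam| + a * |μ| := by
    have t : |(a * μ + b * lam) + (-(a * μ))| ≤ |a * μ + b * lam| + |(-(a * μ))| :=
      abs_add_le _ _
    have e : (a * μ + b * lam) + (-(a * μ)) = b * lam := by ring
    rw [e, abs_neg, abs_mul, abs_mul, abs_of_nonneg ha, abs_of_nonneg hb0] at t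
    exact t
  -- key2 : a|μ| ≤ a * x * (1 + b)  and hence ≤ 2 a x
  have h5 : |μ| ≤ a * |Q 0 0| + b * x := by
    calc |μ| ≤ |a * Q 0 0| + |b * Q 0 1| := abs_add_le _ _
      _ = a * |Q 0 0| + b * x := by
          rw [abs_mul, abs_mul, abs_of_nonneg ha, abs_of_nonneg hb0]
  have key2 : a * |μ| ≤ a * x * (1 + b) := by
    nlinarith [mul_le_mul_of_nonneg_left h5 ha, mul_le_mul_of_nonneg_left h4 ha]
  have key2' : a * |μ| ≤ 2 * (a * x) := by nlinarith [mul_nonneg ha hx0]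
  -- key3 : b|Q11| ≤ C|lam|
  have key3 : b * |Q 1 1| ≤ C * |lam| := by
    nlinarith [mul_nonneg ha hx0]
  -- hkey : (4C²−1) b|lam| ≤ (4C²+1) a|μ|
  have hkey : (4 * C ^ 2 - 1) * (b * |lam|) ≤ (4 * C ^ 2 + 1) * (a * |μ|) := by
    have t := mul_le_mul_of_nonneg_left key1 (by positivity : (0:ℝ) ≤ 4 * C ^ 2)
    linarith [t, h3]
  have goal1 : b * |lam| ≤ 4 * (a * x) := by
    have t := mul_le_mul_of_nonneg_left key2' (by positivity : (0:ℝ) ≤ 4 * C ^ 2 + 1)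
    nlinarith [hkey, t, mul_nonneg (mul_nonneg ha hx0)
      (by linarith : (0:ℝ) ≤ C ^ 2 - 16), mul_nonneg ha hx0, hC2]
  refine ⟨by linarith, ?_⟩
  -- second part
  have h6 : b * (b * |Q 1 1|) ≤ C * (b * |lam|) := by
    have := mul_le_mul_of_nonneg_left key3 hb0
    linarith [this]
  have h7 : (4 * C ^ 2 - 1) * (b * b * |Q 1 1|) ≤
      C * ((4 * C ^ 2 + 1) * (a * x * (1 + b))) := by
    have t1 := mul_le_mul_of_nonneg_left h6 (by nlinarith [hC2] : (0:ℝ) ≤ 4 * C ^ 2 - 1)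
    have t2 := mul_le_mul_of_nonneg_left hkey (by linarith : (0:ℝ) ≤ C)
    have t3 := mul_le_mul_of_nonneg_left key2
      (by positivity : (0:ℝ) ≤ C * (4 * C ^ 2 + 1))
    nlinarith [t1, t2, t3]
  have h9 : (4 * C ^ 2 + 1) * (1 + b) ≤ 8 * (4 * C ^ 2 - 1) * (b * b) := by
    nlinarith [sq_nonneg (2 * b - 1),
      mul_nonneg (by linarith : (0:ℝ) ≤ 2 * b - 1) (by linarith : (0:ℝ) ≤ C ^ 2 - 16),
      mul_nonneg (mul_nonneg (by linarith : (0:ℝ) ≤ 2 * b - 1)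
        (by linarith : (0:ℝ) ≤ 2 * b - 1)) (by linarith : (0:ℝ) ≤ C ^ 2 - 16)]
  have h8 : C * ((4 * C ^ 2 + 1) * (a * x * (1 + b))) ≤
      ((4 * C ^ 2 - 1) * (b * b)) * (8 * C * a * x) := by
    have := mul_le_mul_of_nonneg_left h9
      (mul_nonneg (by linarith : (0:ℝ) ≤ C) (mul_nonneg ha hx0))
    nlinarith [this]
  have hK : (0:ℝ) < (4 * C ^ 2 - 1) * (b * b) := by nlinarith
  have hfin : ((4 * C ^ 2 - 1) * (b * b)) * |Q 1 1| ≤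
      ((4 * C ^ 2 - 1) * (b * b)) * (8 * C * a * x) := by nlinarith [h7, h8]
  exact le_of_mul_le_mul_left hfin hK
end

section
/- Let H be a finite simple graph, let L ⊆ V(H) be the set of leaves of H (vertices of degree exactly 1), let K ⊆ V(H)∖L, let L₁ = {v ∈ L : the unique neighbor of v lies in K}, and let L₂ = L∖L₁. Suppose the induced subgraph of H on V(H)∖(K ∪ L) has b connected components and b + s vertices. Then the induced subgraph of H on V(H)∖(K ∪ L₁) has at least b − s − |L₂| isolated vertices, i.e. at least b − s − |L₂| vertices of V(H)∖(K ∪ L₁) have no neighbor (in H) belonging to V(H)∖(K ∪ L₁). -/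
/-!
Write `A = V ∖ (K ∪ L)` and `B = V ∖ (K ∪ L₁)`, so that `A ⊆ B` and `B ∖ A ⊆ L₂`.
Every component of `H[A]` that is not an isolated vertex has at least two vertices, so
`2b ≤ |A| + #(isolated vertices of H[A]) = b + s + #(isolated vertices of H[A])`.
Passing from `A` to `B`, an isolated vertex of `H[A]` stays isolated unless it is the
unique neighbour of one of the leaves in `B ∖ A`, which costs at most `|L₂|` vertices.
-/

open Finset

namespace SimpleGraph

variable {W : Type*} [Fintype W] (G : SimpleGraph W) [DecidableRel G.Adj]

theorem two_le_card_fiber_add_card_isolated_fiber [DecidableEq G.ConnectedComponent]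
    (c : G.ConnectedComponent) :
    2 ≤ #{v | G.connectedComponentMk v = c} +
      #{v | (∀ u, ¬ G.Adj v u) ∧ G.connectedComponentMk v = c} := by
  classical
  induction c using ConnectedComponent.ind with | h v => ?_
  by_cases hv : ∀ u, ¬ G.Adj v u
  · exact Nat.add_le_add (card_pos.2 ⟨v, by simp⟩) (card_pos.2 ⟨v, by simp [hv]⟩)
  · push Not at hv
    obtain ⟨u, hvu⟩ := hv
    have hpair : {v, u} ⊆ ({w | G.connectedComponentMk w = G.connectedComponentMk v} :
        Finset W) := by
      simp [insert_subset_iff, hvu.symm.reachable]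
    have hcard := card_le_card hpair
    rw [card_pair hvu.ne] at hcard
    omega

theorem two_mul_card_connectedComponent_le :
    2 * Nat.card G.ConnectedComponent ≤ Fintype.card W + #{v | ∀ u, ¬ G.Adj v u} := by
  classical
  have hfibers (s : Finset W) := card_eq_sum_card_fiberwise (s := s) (t := univ)
    (f := G.connectedComponentMk) fun _ _ => mem_coe.2 (mem_univ _)
  rw [Nat.card_eq_fintype_card, ← card_univ, ← card_univ, hfibers, hfibers, ← sum_add_distrib,
    mul_comm, card_eq_sum_ones, sum_mul]
  refine sum_le_sum fun c _ => ?_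
  simpa [filter_filter] using G.two_le_card_fiber_add_card_isolated_fiber c

variable {V : Type*} [Fintype V] [DecidableEq V] (H : SimpleGraph V) [DecidableRel H.Adj]

def isolatedIn (s : Finset V) : Finset V :=
  {v ∈ s | ∀ u ∈ s, ¬ H.Adj v u}

theorem card_isolatedIn_eq (s : Finset V) [DecidableRel (H.induce (s : Set V)).Adj] :
    #(H.isolatedIn s) = #{v : (s : Set V) | ∀ u, ¬ (H.induce (s : Set V)).Adj v u} := by
  rw [← card_map (Function.Embedding.subtype _)]
  congr 1
  ext v
  simp [isolatedIn, and_comm]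

theorem two_mul_card_connectedComponent_induce_le (s : Finset V) :
    2 * Nat.card (H.induce (s : Set V)).ConnectedComponent ≤ #s + #(H.isolatedIn s) := by
  classical
  simpa [H.card_isolatedIn_eq s] using (H.induce (s : Set V)).two_mul_card_connectedComponent_le

theorem card_isolatedIn_le_add {s t : Finset V} (hst : s ⊆ t)
    (hdeg : ∀ u ∈ t \ s, H.degree u ≤ 1) :
    #(H.isolatedIn s) ≤ #(H.isolatedIn t) + #(t \ s) := by
  have hsub :
      H.isolatedIn s ⊆ H.isolatedIn t ∪ (t \ s).biUnion (fun u => H.neighborFinset u) := by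
    intro v hv
    simp only [isolatedIn, mem_filter] at hv
    by_cases hvt : ∀ u ∈ t, ¬ H.Adj v u
    · exact mem_union_left _ (mem_filter.2 ⟨hst hv.1, hvt⟩)
    · push Not at hvt
      obtain ⟨u, hut, hvu⟩ := hvt
      have hus : u ∉ s := fun hus => hv.2 u hus hvu
      exact mem_union_right _ (mem_biUnion.2
        ⟨u, mem_sdiff.2 ⟨hut, hus⟩, (H.mem_neighborFinset u v).2 hvu.symm⟩)
  calc #(H.isolatedIn s)
      ≤ #(H.isolatedIn t) + #((t \ s).biUnion (fun u => H.neighborFinset u)) :=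
        (card_le_card hsub).trans (card_union_le _ _)
    _ ≤ #(H.isolatedIn t) + ∑ u ∈ t \ s, H.degree u := by
        gcongr
        exact card_biUnion_le
    _ ≤ #(H.isolatedIn t) + #(t \ s) := by
        gcongr
        simpa using sum_le_sum hdeg

end SimpleGraph

theorem stmt19_general {V : Type} [Fintype V] [DecidableEq V]
    (H : SimpleGraph V) [DecidableRel H.Adj]
    (L : Finset V) (hL : L = Finset.univ.filter (fun v => H.degree v = 1))
    (K : Finset V)
    (L₁ : Finset V) (hL₁ : L₁ = L.filter (fun v => H.neighborFinset v ⊆ K))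
    (L₂ : Finset V) (hL₂ : L₂ = L \ L₁)
    (b s : ℕ)
    (hb : Nat.card ((H.induce (((K ∪ L)ᶜ : Finset V) : Set V)).ConnectedComponent) = b)
    (hcard : ((K ∪ L)ᶜ : Finset V).card = b + s) :
    (b : ℤ) - s - L₂.card ≤
      ((((K ∪ L₁)ᶜ : Finset V).filter
        (fun v => ∀ u ∈ ((K ∪ L₁)ᶜ : Finset V), ¬ H.Adj v u)).card : ℤ) := by
  have hAB : (K ∪ L)ᶜ ⊆ (K ∪ L₁)ᶜ :=
    compl_subset_compl.2 (union_subset_union_right (hL₁ ▸ filter_subset _ _))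
  have hBA : (K ∪ L₁)ᶜ \ (K ∪ L)ᶜ ⊆ L₂ := by
    intro v hv
    simp only [hL₂, mem_sdiff, mem_compl, mem_union, not_or] at hv ⊢
    tauto
  have hdeg : ∀ u ∈ (K ∪ L₁)ᶜ \ (K ∪ L)ᶜ, H.degree u ≤ 1 := by
    intro u hu
    have hu : u ∈ L := (hL₂ ▸ sdiff_subset) (hBA hu)
    rw [hL, mem_filter] at hu
    exact hu.2.le
  have hcomponents := H.two_mul_card_connectedComponent_induce_le (K ∪ L)ᶜ
  rw [hb, hcard] at hcomponents
  have hisolated := H.card_isolatedIn_le_add hAB hdeg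
  have hL₂card := card_le_card hBA
  change _ ≤ ((H.isolatedIn (K ∪ L₁)ᶜ).card : ℤ)
  omega

/-- the isolated-vertices counting claim. -/
theorem stmt19 {V : Type} [Fintype V] [DecidableEq V]
    (H : SimpleGraph V) [DecidableRel H.Adj]
    (L : Finset V) (hL : L = Finset.univ.filter (fun v => H.degree v = 1))
    (K : Finset V) (hK : K ⊆ Lᶜ)
    (L₁ : Finset V) (hL₁ : L₁ = L.filter (fun v => H.neighborFinset v ⊆ K))
    (L₂ : Finset V) (hL₂ : L₂ = L \ L₁)
    (b s : ℕ)
    (hb : Nat.card ((H.induce (((K ∪ L)ᶜ : Finset V) : Set V)).ConnectedComponent) = b)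
    (hcard : ((K ∪ L)ᶜ : Finset V).card = b + s) :
    (b : ℤ) - s - L₂.card ≤
      ((((K ∪ L₁)ᶜ : Finset V).filter
        (fun v => ∀ u ∈ ((K ∪ L₁)ᶜ : Finset V), ¬ H.Adj v u)).card : ℤ) :=
  stmt19_general H L hL K L₁ hL₁ L₂ hL₂ b s hb hcard
end
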